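/- arXiv:1711.09459 — 2 statements merged into one kernel-verified Lean document; each statement's English description precedes it below -/
import Mathlib

section
/- Let F = (F_1,…,F_g) ∈ M_d(ℂ)^g. Then for every n and every X ∈ M_n(ℂ)^g: L_F(X) is positive semidefinite if and only if I + Λ_F(X) is invertible and ‖(I + Λ_F(X))^{-1} Λ_F(X)‖ ≤ 1. In other words, D_F(n) = {X ∈ M_n(ℂ)^g : I + Λ_F(X) invertible and ‖(I+Λ_F(X))^{-1}Λ_F(X)‖ ≤ 1}. -/
open scoped Kronecker Matrix Matrix.Norms.L2Operator ComplexOrder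

noncomputable section

/-- `Λ_A(X) = Σⱼ Aⱼ ⊗ Xⱼ` (Kronecker product), a `dn × dn` matrix. -/
def lamK {g d n : ℕ} (A : Fin g → Matrix (Fin d) (Fin d) ℂ)
    (X : Fin g → Matrix (Fin n) (Fin n) ℂ) :
    Matrix (Fin d × Fin n) (Fin d × Fin n) ℂ :=
  ∑ j, (A j) ⊗ₖ (X j)

/-- `L_A(X) = I + Λ_A(X) + Λ_A(X)^*`. -/
def Lpen {g d n : ℕ} (A : Fin g → Matrix (Fin d) (Fin d) ℂ)
    (X : Fin g → Matrix (Fin n) (Fin n) ℂ) :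
    Matrix (Fin d × Fin n) (Fin d × Fin n) ℂ :=
  1 + lamK A X + (lamK A X)ᴴ

/-- The `n × n` block of a `gn × gn` matrix in position `(j, i)`. -/
def blk {g n : ℕ} (M : Matrix (Fin g × Fin n) (Fin g × Fin n) ℂ) (j i : Fin g) :
    Matrix (Fin n) (Fin n) ℂ :=
  fun a b => M (j, a) (i, b)

/-- The convexotonic map `p(X) = X (I - Λ_Ξ(X))⁻¹`, given blockwise by
`p(X)ᵢ = Σⱼ Xⱼ [(I - Λ_Ξ(X))⁻¹]_{j,i}`. -/
def pmap {g n : ℕ} (Ξ : Fin g → Matrix (Fin g) (Fin g) ℂ)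
    (X : Fin g → Matrix (Fin n) (Fin n) ℂ) : Fin g → Matrix (Fin n) (Fin n) ℂ :=
  fun i => ∑ j, X j * blk ((1 - lamK Ξ X)⁻¹) j i

/-- The convexotonic map `q(X) = X (I + Λ_Ξ(X))⁻¹`, given blockwise by
`q(X)ᵢ = Σⱼ Xⱼ [(I + Λ_Ξ(X))⁻¹]_{j,i}`. -/
def qmap {g n : ℕ} (Ξ : Fin g → Matrix (Fin g) (Fin g) ℂ)
    (X : Fin g → Matrix (Fin n) (Fin n) ℂ) : Fin g → Matrix (Fin n) (Fin n) ℂ :=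
  fun i => ∑ j, X j * blk ((1 + lamK Ξ X)⁻¹) j i

/-- A tuple `Ξ` of `g × g` matrices is convexotonic if
`Ξ_k Ξ_j = Σ_s (Ξ_j)_{k,s} Ξ_s` for all `j, k`. -/
def Convexotonic {g : ℕ} (Ξ : Fin g → Matrix (Fin g) (Fin g) ℂ) : Prop :=
  ∀ j k, Ξ k * Ξ j = ∑ s, (Ξ j) k s • Ξ s

/-- `Λ_A(α) = Σⱼ αⱼ Aⱼ` for a scalar point `α ∈ ℂ^g`. -/
def lamScalar {g d : ℕ} (A : Fin g → Matrix (Fin d) (Fin d) ℂ) (α : Fin g → ℂ) :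
    Matrix (Fin d) (Fin d) ℂ :=
  ∑ j, α j • A j

/-- A hyperbasis of `ℂ^d`: `d+1` vectors, each `d` of which form a basis. -/
def Hyperbasis {d : ℕ} (u : Fin (d + 1) → (Fin d → ℂ)) : Prop :=
  ∀ i : Fin (d + 1),
    LinearIndependent ℂ (fun j : {j : Fin (d + 1) // j ≠ i} => u j) ∧
    Submodule.span ℂ (Set.range fun j : {j : Fin (d + 1) // j ≠ i} => u j) = ⊤

/-- The tuple `A ∈ M_d(ℂ)^g` is sv-generic. -/
def SvGeneric {g d : ℕ} (A : Fin g → Matrix (Fin d) (Fin d) ℂ) : Prop :=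
  (∃ (α : Fin (d + 1) → (Fin g → ℂ)) (u : Fin (d + 1) → (Fin d → ℂ)),
    (∀ j, (1 - (lamScalar A (α j))ᴴ * lamScalar A (α j)).PosSemidef ∧
      u j ≠ 0 ∧
      LinearMap.ker (Matrix.mulVecLin (1 - (lamScalar A (α j))ᴴ * lamScalar A (α j)))
        = Submodule.span ℂ {u j}) ∧
    Hyperbasis u) ∧
  (∃ (β : Fin d → (Fin g → ℂ)) (v : Fin d → (Fin d → ℂ)),
    (∀ k, (1 - lamScalar A (β k) * (lamScalar A (β k))ᴴ).PosSemidef ∧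
      v k ≠ 0 ∧
      LinearMap.ker (Matrix.mulVecLin (1 - lamScalar A (β k) * (lamScalar A (β k))ᴴ))
        = Submodule.span ℂ {v k}) ∧
    LinearIndependent ℂ v ∧ Submodule.span ℂ (Set.range v) = ⊤)

/-- Evaluation of a `k × l` matrix of noncommutative polynomials at a tuple of
`n × n` matrices, yielding a `kn × ln` matrix. -/
def polyEval {k l g n : ℕ} (Q : Matrix (Fin k) (Fin l) (FreeAlgebra ℂ (Fin g)))
    (X : Fin g → Matrix (Fin n) (Fin n) ℂ) :
    Matrix (Fin k × Fin n) (Fin l × Fin n) ℂ :=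
  fun a b => (FreeAlgebra.lift ℂ X) (Q a.1 b.1) a.2 b.2

/-! With `M = 1 + Λ` one has `1 + Λ + Λᴴ = M Mᴴ - Λ Λᴴ`, so positivity says
`‖Λᴴ v‖ ≤ ‖Mᴴ v‖` for every vector `v`. This forces `Mᴴ` to be injective: if `Mᴴ v = 0` then
`Λᴴ v = 0`, hence `v = Mᴴ v - Λᴴ v = 0`. Once `M` is invertible, substituting `w = Mᴴ v` turns
the inequality into `‖Λᴴ (Mᴴ)⁻¹ w‖ ≤ ‖w‖`, i.e. `‖(M⁻¹ Λ)ᴴ‖ = ‖M⁻¹ Λ‖ ≤ 1`. -/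

namespace Matrix

variable {𝕜 m n k : Type*} [RCLike 𝕜] [Fintype m] [Fintype n] [Fintype k]

lemma star_dotProduct_self_eq_norm_sq (v : n → 𝕜) :
    star v ⬝ᵥ v = (‖WithLp.toLp 2 v‖ : 𝕜) ^ 2 := by
  rw [dotProduct_comm, ← EuclideanSpace.inner_toLp_toLp, inner_self_eq_norm_sq_to_K]

lemma star_dotProduct_mul_conjTranspose_mulVec (B : Matrix m n 𝕜) (v : m → 𝕜) :
    star v ⬝ᵥ (B * Bᴴ) *ᵥ v = (‖WithLp.toLp 2 (Bᴴ *ᵥ v)‖ : 𝕜) ^ 2 := by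
  rw [← star_dotProduct_self_eq_norm_sq, star_mulVec, conjTranspose_conjTranspose,
    ← mulVec_mulVec, dotProduct_mulVec]

lemma posSemidef_mul_conjTranspose_sub_iff (M : Matrix m k 𝕜) (N : Matrix m n 𝕜) :
    (M * Mᴴ - N * Nᴴ).PosSemidef ↔
      ∀ v : m → 𝕜, ‖WithLp.toLp 2 (Nᴴ *ᵥ v)‖ ≤ ‖WithLp.toLp 2 (Mᴴ *ᵥ v)‖ := by
  have hHerm : (M * Mᴴ - N * Nᴴ).IsHermitian :=
    (isHermitian_mul_conjTranspose_self M).sub (isHermitian_mul_conjTranspose_self N)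
  simp only [posSemidef_iff_dotProduct_mulVec, hHerm, true_and, sub_mulVec, dotProduct_sub,
    star_dotProduct_mul_conjTranspose_mulVec, sub_nonneg]
  norm_cast
  exact forall_congr' fun v ↦ pow_le_pow_iff_left₀ (norm_nonneg _) (norm_nonneg _) two_ne_zero

lemma l2_opNorm_le_one_iff [DecidableEq n] (A : Matrix m n 𝕜) :
    ‖A‖ ≤ 1 ↔ ∀ v : n → 𝕜, ‖WithLp.toLp 2 (A *ᵥ v)‖ ≤ ‖WithLp.toLp 2 v‖ := by
  rw [l2_opNorm_def, ContinuousLinearMap.opNorm_le_iff zero_le_one]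
  exact ⟨fun h v ↦ by simpa using h (WithLp.toLp 2 v),
    fun h x ↦ by simpa [toLpLin_apply] using h x.ofLp⟩

lemma l2_opNorm_inv_mul_le_one_iff [DecidableEq m] [DecidableEq n] {M : Matrix m m 𝕜}
    (hM : IsUnit M) (N : Matrix m n 𝕜) :
    ‖M⁻¹ * N‖ ≤ 1 ↔ ∀ v : m → 𝕜, ‖WithLp.toLp 2 (Nᴴ *ᵥ v)‖ ≤ ‖WithLp.toLp 2 (Mᴴ *ᵥ v)‖ := by
  have hMH : IsUnit Mᴴ := (isUnit_conjTranspose M).mpr hM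
  rw [← l2_opNorm_conjTranspose, l2_opNorm_le_one_iff, conjTranspose_mul,
    conjTranspose_nonsing_inv, ((mulVec_surjective_iff_isUnit).mpr hMH).forall]
  simp only [mulVec_mulVec, Matrix.mul_assoc,
    nonsing_inv_mul _ ((isUnit_iff_isUnit_det _).mp hMH), Matrix.mul_one]

lemma isUnit_one_add_of_norm_conjTranspose_mulVec_le [DecidableEq m] {N : Matrix m m 𝕜}
    (h : ∀ v : m → 𝕜, ‖WithLp.toLp 2 (Nᴴ *ᵥ v)‖ ≤ ‖WithLp.toLp 2 ((1 + N)ᴴ *ᵥ v)‖) :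
    IsUnit (1 + N) := by
  rw [← isUnit_conjTranspose, ← mulVec_injective_iff_isUnit, ← coe_mulVecLin,
    injective_iff_map_eq_zero]
  intro v hv
  rw [mulVecLin_apply] at hv
  have hNv := h v
  rw [hv, WithLp.toLp_zero, norm_zero, norm_le_zero_iff, WithLp.toLp_eq_zero] at hNv
  simpa [conjTranspose_add, add_mulVec, hNv] using hv

lemma one_add_add_conjTranspose_eq [DecidableEq m] (A : Matrix m m 𝕜) :
    1 + A + Aᴴ = (1 + A) * (1 + A)ᴴ - A * Aᴴ := by
  simp only [conjTranspose_add, conjTranspose_one]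
  noncomm_ring

lemma posSemidef_one_add_add_conjTranspose_iff [DecidableEq m] (A : Matrix m m 𝕜) :
    (1 + A + Aᴴ).PosSemidef ↔ IsUnit (1 + A) ∧ ‖(1 + A)⁻¹ * A‖ ≤ 1 := by
  rw [one_add_add_conjTranspose_eq, posSemidef_mul_conjTranspose_sub_iff]
  refine ⟨fun h ↦ ?_, fun ⟨hA, h⟩ ↦ (l2_opNorm_inv_mul_le_one_iff hA A).mp h⟩
  have hA := isUnit_one_add_of_norm_conjTranspose_mulVec_le h
  exact ⟨hA, (l2_opNorm_inv_mul_le_one_iff hA A).mpr h⟩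

end Matrix

/-- `L_F(X)` is positive semidefinite iff `I + Λ_F(X)` is invertible
and `‖(I + Λ_F(X))⁻¹ Λ_F(X)‖ ≤ 1`. -/
theorem spectrahedron_eq_contraction_set {g d : ℕ}
    (F : Fin g → Matrix (Fin d) (Fin d) ℂ) :
    ∀ (n : ℕ) (X : Fin g → Matrix (Fin n) (Fin n) ℂ),
      (Lpen F X).PosSemidef ↔
        IsUnit (1 + lamK F X) ∧ ‖(1 + lamK F X)⁻¹ * lamK F X‖ ≤ 1 :=
  fun _ X ↦ Matrix.posSemidef_one_add_add_conjTranspose_iff (lamK F X)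
end
end

section
/- Let J = (J_1,…,J_g) ∈ M_d(ℂ)^g be linearly independent with the span of J_1,…,J_g closed under multiplication, and let Ξ ∈ M_g(ℂ)^g be the unique tuple with J_k J_j = Σ_{s=1}^g (Ξ_j)_{k,s} J_s. Then for every n and every X ∈ M_n(ℂ)^g such that L_J(X) is positive semidefinite but not invertible (i.e., X lies in the boundary of D_J(n)), the matrix I + Λ_Ξ(X) is invertible and ‖Λ_J(q(X))‖ = 1, where q(X) = X(I+Λ_Ξ(X))^{-1}; that is, q maps the boundary of D_J into the boundary of the spectraball B_J. -/
open scoped Kronecker Matrix Matrix.Norms.L2Operator ComplexOrder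

noncomputable section

/-!
Reading a tuple `Z` as the row `[Z₁ ⋯ Z_g]`, the multiplication rule for `J` makes `Λ_J`
multiplicative: `Λ_J(Z) Λ_J(Y) = Λ_J(Z Λ_Ξ(Y))`. So the injective map `Λ_J` turns right
multiplication by `I + Λ_Ξ(X)` into right multiplication by `M = I + Λ_J(X)`, which is invertible
since `L_J(X) = M + M* - I ⪰ 0`; hence `I + Λ_Ξ(X)` is invertible too, and `E = Λ_J(q(X))`
satisfies `E M = Λ_J(X)`, i.e. `E = I - M⁻¹`. Then `I - E*E = M⁻* L_J(X) M⁻¹` is positive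
semidefinite and singular, which in a C⋆-algebra means exactly that `‖E‖ = 1`.
-/

section StarRing

variable {R : Type*} [Ring R] [StarRing R]

lemma one_sub_star_mul_self_eq_of_mul_eq {u : Rˣ} {e : R} (he : e * u = u - 1) :
    1 - star e * e = star (↑u⁻¹ : R) * (u + star (u : R) - 1) * ↑u⁻¹ := by
  have he' : e = 1 - ↑u⁻¹ := by
    rw [← mul_one e, ← u.mul_inv, ← mul_assoc, he, sub_mul, u.mul_inv, one_mul]
  have hstar : star (↑u⁻¹ : R) * star (u : R) = 1 := by
    rw [← star_mul, u.mul_inv, star_one]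
  subst he'
  calc 1 - star (1 - (↑u⁻¹ : R)) * (1 - ↑u⁻¹)
      = star (↑u⁻¹ : R) * (u * ↑u⁻¹) + star (↑u⁻¹ : R) * star (u : R) * ↑u⁻¹
          - star (↑u⁻¹ : R) * ↑u⁻¹ := by
        rw [u.mul_inv, hstar, star_sub, star_one]; noncomm_ring
    _ = _ := by noncomm_ring

end StarRing

section CStarAlgebra

variable {A : Type*} [CStarAlgebra A] [PartialOrder A] [StarOrderedRing A]

/-- `1` lies in the spectrum of `a⋆a`, which bounds `‖a⋆a‖ = ‖a‖²` from below. -/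
lemma norm_eq_one_of_star_mul_self_le_one {a : A} (hle : star a * a ≤ 1)
    (hsing : ¬IsUnit (1 - star a * a)) : ‖a‖ = 1 := by
  have : Nontrivial A := not_subsingleton_iff_nontrivial.1 fun _ => hsing (isUnit_of_subsingleton _)
  have hupper : ‖star a * a‖ ≤ 1 :=
    (CStarAlgebra.norm_le_one_iff_of_nonneg _ (star_mul_self_nonneg a)).2 hle
  have hspec : (1 : ℂ) ∈ spectrum ℂ (star a * a) := by
    rwa [spectrum.mem_iff, map_one]
  have hlower : 1 ≤ ‖star a * a‖ := by
    simpa using spectrum.norm_le_norm_of_mem hspec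
  rw [CStarRing.norm_star_mul_self] at hupper hlower
  nlinarith [norm_nonneg a]

lemma norm_eq_one_of_mul_one_add_eq {Λ e : A} (hunit : IsUnit (1 + Λ)) (he : e * (1 + Λ) = Λ)
    (hL : 0 ≤ 1 + Λ + star Λ) (hsing : ¬IsUnit (1 + Λ + star Λ)) : ‖e‖ = 1 := by
  obtain ⟨u, hu⟩ := hunit
  have hL_eq : 1 + Λ + star Λ = u + star (u : A) - 1 := by
    rw [hu, star_add, star_one]; abel
  have hdefect := one_sub_star_mul_self_eq_of_mul_eq (e := e) (by rw [hu, he]; abel)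
  rw [← hL_eq] at hdefect
  refine norm_eq_one_of_star_mul_self_le_one ?_ fun hunit' => hsing ?_
  · rw [← sub_nonneg, hdefect]
    exact star_left_conjugate_nonneg hL _
  · have hconj : 1 + Λ + star Λ = star (u : A) * (1 - star e * e) * u := by
      rw [hdefect, ← mul_assoc, ← mul_assoc, ← star_mul, u.inv_mul, star_one, one_mul,
        mul_assoc, u.inv_mul, mul_one]
    rw [hconj]
    exact ((u.isUnit.star).mul hunit').mul u.isUnit

end CStarAlgebra

lemma Matrix.isUnit_one_add_of_posSemidef {m : Type*} [Fintype m] [DecidableEq m]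
    {M : Matrix m m ℂ} (h : (1 + M + Mᴴ).PosSemidef) : IsUnit (1 + M) := by
  rw [Matrix.isUnit_iff_isUnit_det, isUnit_iff_ne_zero]
  intro hdet
  obtain ⟨v, hv, hvM⟩ := Matrix.exists_mulVec_eq_zero_iff.2 hdet
  have hMv : M *ᵥ v = -v := by
    rw [Matrix.add_mulVec, Matrix.one_mulVec] at hvM
    exact eq_neg_of_add_eq_zero_right hvM
  have hform : star v ⬝ᵥ ((1 + M + Mᴴ) *ᵥ v) = -(star v ⬝ᵥ v) := by
    rw [Matrix.add_mulVec, hvM, zero_add, Matrix.dotProduct_mulVec, Matrix.vecMul_conjTranspose,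
      star_star, hMv, star_neg, neg_dotProduct]
  have hnonneg := h.dotProduct_mulVec_nonneg v
  rw [hform, neg_nonneg] at hnonneg
  exact hv (dotProduct_star_self_eq_zero.1 (le_antisymm hnonneg (dotProduct_star_self_nonneg v)))

section MatrixOrder

open scoped MatrixOrder

lemma Matrix.l2_opNorm_eq_one_of_mul_one_add_eq {m : Type*} [Fintype m] [DecidableEq m]
    {Λ E : Matrix m m ℂ} (hE : E * (1 + Λ) = Λ) (hL : (1 + Λ + Λᴴ).PosSemidef)
    (hsing : ¬IsUnit (1 + Λ + Λᴴ)) : ‖E‖ = 1 :=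
  norm_eq_one_of_mul_one_add_eq (Matrix.isUnit_one_add_of_posSemidef hL) hE
    (Matrix.nonneg_iff_posSemidef.2 hL) hsing

end MatrixOrder

lemma Matrix.sum_kronecker {R ι l m n p : Type*} [NonUnitalNonAssocSemiring R] (s : Finset ι)
    (f : ι → Matrix l m R) (B : Matrix n p R) :
    (∑ i ∈ s, f i) ⊗ₖ B = ∑ i ∈ s, f i ⊗ₖ B := by
  ext
  simp [Matrix.sum_apply, Finset.sum_mul]

lemma Matrix.kronecker_sum {R ι l m n p : Type*} [NonUnitalNonAssocSemiring R] (s : Finset ι)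
    (A : Matrix l m R) (f : ι → Matrix n p R) :
    A ⊗ₖ (∑ i ∈ s, f i) = ∑ i ∈ s, A ⊗ₖ f i := by
  ext
  simp [Matrix.sum_apply, Finset.mul_sum]

/-- A tuple `X = (X₁, …, X_g)` of `n × n` matrices as the `n × gn` row `[X₁ ⋯ X_g]`. -/
@[simps]
def tupleEquivRow {ι m : Type*} : (ι → Matrix m m ℂ) ≃ₗ[ℂ] Matrix m (ι × m) ℂ where
  toFun X := Matrix.of fun a p => X p.1 a p.2
  invFun R k := Matrix.of fun a b => R a (k, b)
  map_add' _ _ := rfl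
  map_smul' _ _ := rfl
  left_inv _ := rfl
  right_inv _ := rfl

section Tuples

variable {g d n : ℕ} {J : Fin g → Matrix (Fin d) (Fin d) ℂ}
  {Ξ : Fin g → Matrix (Fin g) (Fin g) ℂ}

lemma tupleEquivRow_symm_mul_apply (X : Fin g → Matrix (Fin n) (Fin n) ℂ)
    (B : Matrix (Fin g × Fin n) (Fin g × Fin n) ℂ) (i : Fin g) :
    tupleEquivRow.symm (tupleEquivRow X * B) i = ∑ j, X j * blk B j i := by
  ext a b
  simp [blk, Matrix.mul_apply, Matrix.sum_apply, Fintype.sum_prod_type]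

lemma qmap_eq_tupleEquivRow_symm (X : Fin g → Matrix (Fin n) (Fin n) ℂ) :
    qmap Ξ X = tupleEquivRow.symm (tupleEquivRow X * (1 + lamK Ξ X)⁻¹) :=
  funext fun i => (tupleEquivRow_symm_mul_apply X _ i).symm

lemma lamK_add (X Y : Fin g → Matrix (Fin n) (Fin n) ℂ) :
    lamK J (X + Y) = lamK J X + lamK J Y := by
  simp [lamK, Matrix.kronecker_add, Finset.sum_add_distrib]

lemma lamK_zero : lamK J (0 : Fin g → Matrix (Fin n) (Fin n) ℂ) = 0 := by
  simp [lamK]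

lemma lamK_eq_zero (hli : LinearIndependent ℂ J) {Z : Fin g → Matrix (Fin n) (Fin n) ℂ}
    (h : lamK J Z = 0) : Z = 0 := by
  funext j
  ext c e
  have hcomb : ∑ i, Z i c e • J i = 0 := by
    ext a b
    simpa [lamK, Matrix.sum_apply, mul_comm] using congrFun (congrFun h (a, c)) (b, e)
  simpa using Fintype.linearIndependent_iff.1 hli (fun i => Z i c e) hcomb j

lemma blk_lamK (Y : Fin g → Matrix (Fin n) (Fin n) ℂ) (k i : Fin g) :
    blk (lamK Ξ Y) k i = ∑ j, Ξ j k i • Y j := by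
  ext a b
  simp [blk, lamK, Matrix.sum_apply]

/-- In the paper's notation, `Λ_J(X) Λ_J(Y) = Λ_J(X Λ_Ξ(Y))`. -/
lemma lamK_mul_lamK (hΞ : ∀ k j, J k * J j = ∑ s, (Ξ j) k s • J s)
    (X Y : Fin g → Matrix (Fin n) (Fin n) ℂ) :
    lamK J X * lamK J Y = lamK J (tupleEquivRow.symm (tupleEquivRow X * lamK Ξ Y)) := by
  have htuple : tupleEquivRow.symm (tupleEquivRow X * lamK Ξ Y)
      = fun i => ∑ k, ∑ j, Ξ j k i • (X k * Y j) := by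
    funext i
    simp only [tupleEquivRow_symm_mul_apply, blk_lamK, Finset.mul_sum, Matrix.mul_smul]
  rw [htuple]
  simp only [lamK, Finset.sum_mul_sum, ← Matrix.mul_kronecker_mul, hΞ, Matrix.sum_kronecker,
    Matrix.kronecker_sum, Matrix.smul_kronecker, Matrix.kronecker_smul]
  exact (Finset.sum_comm.trans (Finset.sum_congr rfl fun _ _ => Finset.sum_comm)).symm

lemma lamK_mul_one_add (hΞ : ∀ k j, J k * J j = ∑ s, (Ξ j) k s • J s)
    (Z X : Fin g → Matrix (Fin n) (Fin n) ℂ) :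
    lamK J Z * (1 + lamK J X)
      = lamK J (tupleEquivRow.symm (tupleEquivRow Z * (1 + lamK Ξ X))) := by
  rw [mul_add, mul_one, lamK_mul_lamK hΞ, Matrix.mul_add, Matrix.mul_one, map_add,
    LinearEquiv.symm_apply_apply, lamK_add]

lemma isUnit_one_add_lamK (hli : LinearIndependent ℂ J)
    (hΞ : ∀ k j, J k * J j = ∑ s, (Ξ j) k s • J s) {X : Fin g → Matrix (Fin n) (Fin n) ℂ}
    (hM : IsUnit (1 + lamK J X)) : IsUnit (1 + lamK Ξ X) := by
  rw [Matrix.isUnit_iff_isUnit_det, isUnit_iff_ne_zero]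
  intro hdet
  obtain ⟨w, hw, hwB⟩ := Matrix.exists_vecMul_eq_zero_iff.2 hdet
  set R : Matrix (Fin n) (Fin g × Fin n) ℂ := Matrix.of fun _ => w
  have hRB : R * (1 + lamK Ξ X) = 0 := by
    ext a p
    exact congrFun hwB p
  have hlam : lamK J (tupleEquivRow.symm R) = 0 := by
    rw [← hM.mul_left_eq_zero, lamK_mul_one_add hΞ, LinearEquiv.apply_symm_apply, hRB, map_zero,
      lamK_zero]
  have hR : R = 0 := tupleEquivRow.symm.map_eq_zero_iff.1 (lamK_eq_zero hli hlam)
  obtain ⟨p, hp⟩ := Function.ne_iff.1 hw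
  exact hp (congrFun (congrFun hR p.2) p)

lemma lamK_qmap_mul_one_add (hΞ : ∀ k j, J k * J j = ∑ s, (Ξ j) k s • J s)
    {X : Fin g → Matrix (Fin n) (Fin n) ℂ} (hB : IsUnit (1 + lamK Ξ X)) :
    lamK J (qmap Ξ X) * (1 + lamK J X) = lamK J X := by
  rw [lamK_mul_one_add hΞ, qmap_eq_tupleEquivRow_symm, LinearEquiv.apply_symm_apply,
    Matrix.mul_assoc, Matrix.nonsing_inv_mul _ ((Matrix.isUnit_iff_isUnit_det _).1 hB),
    Matrix.mul_one, LinearEquiv.symm_apply_apply]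

end Tuples

theorem qmap_boundary_to_boundary_general {g d : ℕ}
    (J : Fin g → Matrix (Fin d) (Fin d) ℂ)
    (Ξ : Fin g → Matrix (Fin g) (Fin g) ℂ)
    (hli : LinearIndependent ℂ J)
    (hΞ : ∀ k j, J k * J j = ∑ s, (Ξ j) k s • J s) :
    ∀ (n : ℕ) (X : Fin g → Matrix (Fin n) (Fin n) ℂ),
      (Lpen J X).PosSemidef → ¬ IsUnit (Lpen J X) →
        IsUnit (1 + lamK Ξ X) ∧ ‖lamK J (qmap Ξ X)‖ = 1 := by
  intro n X hL hsing
  have hM : IsUnit (1 + lamK J X) := Matrix.isUnit_one_add_of_posSemidef hL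
  have hB : IsUnit (1 + lamK Ξ X) := isUnit_one_add_lamK hli hΞ hM
  exact ⟨hB, Matrix.l2_opNorm_eq_one_of_mul_one_add_eq (lamK_qmap_mul_one_add hΞ hB) hL hsing⟩

/-- if `J` is linearly independent with span closed under
multiplication and `J_k J_j = Σ_s (Ξ_j)_{k,s} J_s`, then for `X` in the boundary
of `D_J` (i.e. `L_J(X)` positive semidefinite but singular), the matrix
`I + Λ_Ξ(X)` is invertible and `‖Λ_J(q(X))‖ = 1`. -/
theorem qmap_boundary_to_boundary {g d : ℕ}
    (J : Fin g → Matrix (Fin d) (Fin d) ℂ)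
    (Ξ : Fin g → Matrix (Fin g) (Fin g) ℂ)
    (hli : LinearIndependent ℂ J)
    (hmul : ∀ k j, J k * J j ∈ Submodule.span ℂ (Set.range J))
    (hΞ : ∀ k j, J k * J j = ∑ s, (Ξ j) k s • J s) :
    ∀ (n : ℕ) (X : Fin g → Matrix (Fin n) (Fin n) ℂ),
      (Lpen J X).PosSemidef → ¬ IsUnit (Lpen J X) →
        IsUnit (1 + lamK Ξ X) ∧ ‖lamK J (qmap Ξ X)‖ = 1 :=
  qmap_boundary_to_boundary_general J Ξ hli hΞ
end
end
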